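/- Let d ≥ 1, 1 ≤ P < d, s ≥ 1 and a < b be real numbers. Let I be a quadrature functional. Let N₁, …, N_P : ℝ^d → ℝ be continuously differentiable with gradients ∇N_p, and let F̃ : ℝ^d → Alt^{P+1}(ℝ^d) assign to each z ∈ ℝ^d an alternating (P+1)-multilinear form F̃(z) on ℝ^d. Suppose x : ℝ → ℝ^d is a polynomial map of degree ≤ s and g₁, …, g_P : ℝ → ℝ^d are polynomial maps of degree ≤ s−1 such that: (i) for every polynomial map y : ℝ → ℝ^d of degree ≤ s−1, I(t ↦ y(t)ᵀ x′(t)) = I(t ↦ F̃(x(t))(g₁(t), …, g_P(t), y(t))); and (ii) for each p and every polynomial map y_p : ℝ → ℝ^d of degree ≤ s−1, I(t ↦ g_p(t)ᵀ y_p(t)) = ∫_a^b ∇N_p(x(t))ᵀ y_p(t) dt. Then N_p(x(b)) = N_p(x(a)) for every p = 1, …, P. -/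

import Mathlib

open Matrix

/-- The continuous linear functional `w ↦ g ⬝ᵥ w` on `Fin d → ℝ`,
representing the gradient vector `g` as a (Fréchet) derivative. -/
noncomputable def dotCLM {d : ℕ} (g : Fin d → ℝ) : (Fin d → ℝ) →L[ℝ] ℝ :=
  LinearMap.toContinuousLinearMap
  { toFun := fun w => g ⬝ᵥ w
    map_add' := by
      intro a b
      simp [dotProduct, mul_add, Finset.sum_add_distrib]
    map_smul' := by
      intro c a
      simp [dotProduct, Finset.mul_sum, mul_left_comm] }

/-- `y : ℝ → Fin d → ℝ` is a polynomial map of degree at most `k`: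
each component is a real polynomial function of degree at most `k`. -/
def IsPolyMap {d : ℕ} (k : ℕ) (y : ℝ → Fin d → ℝ) : Prop :=
  ∀ i : Fin d, ∃ q : Polynomial ℝ, q.natDegree ≤ k ∧ ∀ t : ℝ, y t i = q.eval t

/-! Taking `y = g_p` in the discrete equation (i) makes its right-hand side vanish, since the
alternating form `F̃(x)` then has the repeated argument `g_p`; so `I(g_pᵀ x') = 0`. Taking
`y_p = x'` in the projection equation (ii) identifies the same quantity with
`∫_a^b ∇N_p(x)ᵀ x' dt = N_p(x(b)) - N_p(x(a))`. -/

theorem AlternatingMap.map_snoc_self_eq_zero {R M N : Type*} [CommSemiring R]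
    [AddCommMonoid M] [Module R M] [AddCommMonoid N] [Module R N] {n : ℕ}
    (f : M [⋀^Fin (n + 1)]→ₗ[R] N) (v : Fin n → M) (p : Fin n) :
    f (Fin.snoc v (v p)) = 0 :=
  f.map_eq_zero_of_eq _ (i := p.castSucc) (j := Fin.last n) (by simp)
    (Fin.castSucc_lt_last p).ne

namespace IsPolyMap

variable {d k : ℕ} {y : ℝ → Fin d → ℝ}

theorem continuous (hy : IsPolyMap k y) : Continuous y := by
  refine continuous_pi fun i => ?_
  obtain ⟨q, -, hq⟩ := hy i
  simpa only [hq] using q.continuous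

theorem differentiable (hy : IsPolyMap k y) : Differentiable ℝ y := by
  refine differentiable_pi.2 fun i => ?_
  obtain ⟨q, -, hq⟩ := hy i
  simpa only [hq] using q.differentiable

theorem deriv (hy : IsPolyMap k y) : IsPolyMap (k - 1) (deriv y) := by
  intro i
  obtain ⟨q, hdeg, hq⟩ := hy i
  refine ⟨q.derivative, (q.natDegree_derivative_le).trans (Nat.sub_le_sub_right hdeg 1),
    fun t => ?_⟩
  rw [deriv_pi fun j => differentiableAt_pi.1 (hy.differentiable t) j]
  simp only [hq]
  exact Polynomial.deriv q

end IsPolyMap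

theorem integral_dotProduct_deriv_eq_sub {d : ℕ} {f : (Fin d → ℝ) → ℝ}
    {gradf : (Fin d → ℝ) → Fin d → ℝ} (hf : ∀ z, HasFDerivAt f (dotCLM (gradf z)) z)
    (hgradf : Continuous gradf) {x : ℝ → Fin d → ℝ} (hx : Differentiable ℝ x)
    (hx' : Continuous (deriv x)) (a b : ℝ) :
    ∫ t in a..b, gradf (x t) ⬝ᵥ deriv x t = f (x b) - f (x a) := by
  refine intervalIntegral.integral_eq_sub_of_hasDerivAt (f := fun t => f (x t)) (fun t _ => ?_)
    (((hgradf.comp hx.continuous).dotProduct hx').intervalIntegrable a b)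
  exact (hf (x t)).comp_hasDerivAt t (hx t).hasDerivAt

theorem multi_conservative_scheme_conserves_all_general
    (d P s : ℕ)
    (a b : ℝ)
    (I : (ℝ → ℝ) →ₗ[ℝ] ℝ)
    (N : Fin P → (Fin d → ℝ) → ℝ) (gN : Fin P → (Fin d → ℝ) → (Fin d → ℝ))
    (hN : ∀ p z, HasFDerivAt (N p) (dotCLM (gN p z)) z)
    (hgN : ∀ p, Continuous (gN p))
    (F : (Fin d → ℝ) → AlternatingMap ℝ (Fin d → ℝ) ℝ (Fin (P + 1)))
    (x : ℝ → Fin d → ℝ) (hx : IsPolyMap s x)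
    (g : Fin P → ℝ → Fin d → ℝ) (hg : ∀ p, IsPolyMap (s - 1) (g p))
    (h1 : ∀ y : ℝ → Fin d → ℝ, IsPolyMap (s - 1) y →
      I (fun t => y t ⬝ᵥ deriv x t) =
        I (fun t => F (x t) (Fin.snoc (fun p => g p t) (y t))))
    (h2 : ∀ p : Fin P, ∀ yp : ℝ → Fin d → ℝ, IsPolyMap (s - 1) yp →
      I (fun t => g p t ⬝ᵥ yp t) = ∫ t in a..b, gN p (x t) ⬝ᵥ yp t) :
    ∀ p : Fin P, N p (x b) = N p (x a) := by
  intro p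
  have hx' : IsPolyMap (s - 1) (deriv x) := hx.deriv
  have h_discrete : I (fun t => g p t ⬝ᵥ deriv x t) = 0 := by
    simp only [h1 (g p) (hg p), AlternatingMap.map_snoc_self_eq_zero]
    exact I.map_zero
  have h_exact : I (fun t => g p t ⬝ᵥ deriv x t) = N p (x b) - N p (x a) := by
    rw [h2 p _ hx', integral_dotProduct_deriv_eq_sub (hN p) (hgN p) hx.differentiable
      hx'.continuous]
  exact sub_eq_zero.1 (h_exact.symm.trans h_discrete)

/-- Theorem 2.3: the auxiliary-variable discretisation of a multiply
conservative ODE, written via an alternating-form right-hand side `F̃`, conserves all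
`P` invariants `N₁, …, N_P` over the timestep `[a, b]`. -/
theorem multi_conservative_scheme_conserves_all
    (d P s : ℕ) (hd : 1 ≤ d) (hP : 1 ≤ P) (hPd : P < d) (hs : 1 ≤ s)
    (a b : ℝ) (hab : a < b)
    (I : (ℝ → ℝ) →ₗ[ℝ] ℝ)
    (N : Fin P → (Fin d → ℝ) → ℝ) (gN : Fin P → (Fin d → ℝ) → (Fin d → ℝ))
    (hN : ∀ p z, HasFDerivAt (N p) (dotCLM (gN p z)) z)
    (hgN : ∀ p, Continuous (gN p))
    (F : (Fin d → ℝ) → AlternatingMap ℝ (Fin d → ℝ) ℝ (Fin (P + 1)))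
    (x : ℝ → Fin d → ℝ) (hx : IsPolyMap s x)
    (g : Fin P → ℝ → Fin d → ℝ) (hg : ∀ p, IsPolyMap (s - 1) (g p))
    (h1 : ∀ y : ℝ → Fin d → ℝ, IsPolyMap (s - 1) y →
      I (fun t => y t ⬝ᵥ deriv x t) =
        I (fun t => F (x t) (Fin.snoc (fun p => g p t) (y t))))
    (h2 : ∀ p : Fin P, ∀ yp : ℝ → Fin d → ℝ, IsPolyMap (s - 1) yp →
      I (fun t => g p t ⬝ᵥ yp t) = ∫ t in a..b, gN p (x t) ⬝ᵥ yp t) :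
    ∀ p : Fin P, N p (x b) = N p (x a) :=
  multi_conservative_scheme_conserves_all_general d P s a b I N gN hN hgN F x hx g hg h1 h2
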